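/- Suppose (K₁,B₁) and (K₂,B₂) both lie in (0,∞) × (γ,1), both pairs satisfy the continuous-fit and smooth-fit conditions V_i(−B_i) = V_i(B_i) + c₁ + (c₂/2)(1−B_i) and V_i'(−B_i) = −V_i'(B_i) + c₂/2 with V_i = Ṽ − K_iφ, and the two pasted value functions agree: K₁ = K₂ and the corresponding pasted functions coincide on [−min(B₁,B₂), 1]. If moreover g(x) := V(x) − V(−x) (with V = Ṽ − K₁φ) satisfies g'' < 0 on (−max(B₁,B₂), 0), then B₁ = B₂. -/
import Mathlib


open Set

/-- `V(x) = Ṽ(x) − Kφ(x)`. -/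
noncomputable def Vfun (lam alp K : ℝ) (φ : ℝ → ℝ) : ℝ → ℝ :=
  fun x => 1 / (2 * alp) - x / (2 * (2 * lam + alp)) - K * φ x

/-- The pasted function `W`. -/
noncomputable def Wfun (lam alp K B c₁ c₂ : ℝ) (φ : ℝ → ℝ) : ℝ → ℝ :=
  fun x => if x < -B then Vfun lam alp K φ (-x) + c₁ + c₂ / 2 * (1 + x)
    else Vfun lam alp K φ x

/-- Uniqueness of the pair `(K,B)`: if `(K₁,B₁)` and `(K₂,B₂)` both satisfy the
continuous-fit and smooth-fit conditions, `K₁ = K₂`, the pasted functions coincide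
on `[−min(B₁,B₂),1]`, and `g(x) = V(x) − V(−x)` (with `V = Ṽ − K₁φ`) satisfies
`g'' < 0` on `(−max(B₁,B₂),0)`, then `B₁ = B₂`. -/
theorem stmt18 (lam mu alp c₁ c₂ K₁ K₂ B₁ B₂ : ℝ)
    (hlam : 0 < lam) (hmu : 0 < mu) (halp : 0 < alp)
    (hc₁ : 0 ≤ c₁) (hc₂ : 0 ≤ c₂) (hcs : 0 < c₁ + c₂) (hc₁β : c₁ < 1 / (2 * lam + alp))
    (hK₁ : 0 < K₁) (hK₂ : 0 < K₂)
    (hB₁ : B₁ ∈ Set.Ioo ((c₁ + c₂ / 2) / (1 / (2 * lam + alp) + c₂ / 2)) (1 : ℝ))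
    (hB₂ : B₂ ∈ Set.Ioo ((c₁ + c₂ / 2) / (1 / (2 * lam + alp) + c₂ / 2)) (1 : ℝ))
    (φ φ' φ'' : ℝ → ℝ)
    (hd1 : ∀ x ∈ Set.Ioo (-1 : ℝ) 1, HasDerivAt φ (φ' x) x)
    (hd2 : ∀ x ∈ Set.Ioo (-1 : ℝ) 1, HasDerivAt φ' (φ'' x) x)
    (hode : ∀ x ∈ Set.Ioo (-1 : ℝ) 1,
      mu ^ 2 / 2 * (1 - x ^ 2) ^ 2 * φ'' x - 2 * lam * x * φ' x - alp * φ x = 0)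
    (hanti : StrictAntiOn φ (Set.Ioo (-1 : ℝ) 1))
    (hpos : ∀ x ∈ Set.Ioo (-1 : ℝ) 1, 0 < φ x)
    (hcf₁ : Vfun lam alp K₁ φ (-B₁) = Vfun lam alp K₁ φ B₁ + c₁ + c₂ / 2 * (1 - B₁))
    (hsf₁ : deriv (Vfun lam alp K₁ φ) (-B₁) = -(deriv (Vfun lam alp K₁ φ) B₁) + c₂ / 2)
    (hcf₂ : Vfun lam alp K₂ φ (-B₂) = Vfun lam alp K₂ φ B₂ + c₁ + c₂ / 2 * (1 - B₂))
    (hsf₂ : deriv (Vfun lam alp K₂ φ) (-B₂) = -(deriv (Vfun lam alp K₂ φ) B₂) + c₂ / 2)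
    (hK : K₁ = K₂)
    (hagree : ∀ x ∈ Set.Icc (-(min B₁ B₂)) (1 : ℝ),
      Wfun lam alp K₁ B₁ c₁ c₂ φ x = Wfun lam alp K₂ B₂ c₁ c₂ φ x)
    (hconcave : ∀ x ∈ Set.Ioo (-(max B₁ B₂)) (0 : ℝ),
      deriv (deriv (fun y => Vfun lam alp K₁ φ y - Vfun lam alp K₁ φ (-y))) x < 0) :
    B₁ = B₂ := by
  subst hK
  -- basic positivity facts
  have hβne : (2*lam+alp) ≠ 0 := by positivity
  have hγpos : 0 < (c₁ + c₂ / 2) / (1 / (2 * lam + alp) + c₂ / 2) := by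
    apply div_pos (by linarith) (by positivity)
  have hB₁pos : 0 < B₁ := lt_trans hγpos hB₁.1
  have hB₂pos : 0 < B₂ := lt_trans hγpos hB₂.1
  -- derivative of V
  have hV : ∀ x ∈ Set.Ioo (-1:ℝ) 1,
      HasDerivAt (Vfun lam alp K₁ φ) (-(1/(2*(2*lam+alp))) - K₁ * φ' x) x := by
    intro x hx
    have h := ((hasDerivAt_const x ((1:ℝ)/(2*alp))).sub
      ((hasDerivAt_id x).div_const (2*(2*lam+alp)))).sub ((hd1 x hx).const_mul K₁)
    have heq : (0:ℝ) - 1/(2*(2*lam+alp)) - K₁ * φ' x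
        = -(1/(2*(2*lam+alp))) - K₁ * φ' x := by ring
    rw [heq] at h
    exact h
  set D : ℝ → ℝ := fun y => (-(1/(2*lam+alp)) - K₁ * φ' y) - K₁ * φ' (-y) with hDdef
  -- derivative of f := V(y) - V(-y)
  have hfD : ∀ y ∈ Set.Ioo (-1:ℝ) 1,
      HasDerivAt (fun y => Vfun lam alp K₁ φ y - Vfun lam alp K₁ φ (-y)) (D y) y := by
    intro y hy
    have hny : -y ∈ Set.Ioo (-1:ℝ) 1 := ⟨by linarith [hy.2], by linarith [hy.1]⟩
    have h := (hV y hy).sub (((hV (-y) hny)).comp y (hasDerivAt_neg y))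
    have heq : (-(1/(2*(2*lam+alp))) - K₁ * φ' y)
        - (-(1/(2*(2*lam+alp))) - K₁ * φ' (-y)) * (-1) = D y := by
      simp only [hDdef]
      field_simp
      ring
    rw [heq] at h
    exact h
  -- differentiability of D
  have hDdiff : ∀ x ∈ Set.Ioo (-1:ℝ) 1,
      HasDerivAt D ((0 - K₁ * φ'' x) - K₁ * φ'' (-x) * (-1)) x := by
    intro x hx
    have hnx : -x ∈ Set.Ioo (-1:ℝ) 1 := ⟨by linarith [hx.2], by linarith [hx.1]⟩
    exact ((hasDerivAt_const x (-(1/(2*lam+alp)))).sub ((hd2 x hx).const_mul K₁)).sub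
      (((hd2 (-x) hnx).const_mul K₁).comp x (hasDerivAt_neg x))
  -- second derivative identification
  have hsecond : ∀ x ∈ Set.Ioo (-1:ℝ) 1,
      deriv (deriv (fun y => Vfun lam alp K₁ φ y - Vfun lam alp K₁ φ (-y))) x
        = deriv D x := by
    intro x hx
    apply Filter.EventuallyEq.deriv_eq
    filter_upwards [isOpen_Ioo.mem_nhds hx] with y hy
    exact (hfD y hy).deriv
  -- smooth fit translated to D
  have hDfit : ∀ B : ℝ, 0 < B → B < 1 →
      deriv (Vfun lam alp K₁ φ) (-B) = -(deriv (Vfun lam alp K₁ φ) B) + c₂ / 2 →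
      D (-B) = c₂ / 2 := by
    intro B hB0 hB1 hsf
    have hBm : (-B) ∈ Set.Ioo (-1:ℝ) 1 := ⟨by linarith, by linarith⟩
    have hBp : B ∈ Set.Ioo (-1:ℝ) 1 := ⟨by linarith, by linarith⟩
    rw [(hV (-B) hBm).deriv, (hV B hBp).deriv] at hsf
    have hhalf : 1/(2*lam+alp) = 1/(2*(2*lam+alp)) + 1/(2*(2*lam+alp)) := by
      field_simp
      norm_num
    show (-(1/(2*lam+alp)) - K₁ * φ' (-B)) - K₁ * φ' (-(-B)) = c₂/2
    rw [neg_neg]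
    linarith [hsf]
  -- the key contradiction
  have key : ∀ a b : ℝ, 0 < a → a < b → b < 1 → D (-a) = c₂/2 → D (-b) = c₂/2 →
      (∀ x ∈ Set.Ioo (-b) (0:ℝ),
        deriv (deriv (fun y => Vfun lam alp K₁ φ y - Vfun lam alp K₁ φ (-y))) x < 0) →
      False := by
    intro a b ha hab hb1 hDa hDb hcc
    have hsub : Set.Icc (-b) (-a) ⊆ Set.Ioo (-1:ℝ) 1 := by
      intro x hx
      exact ⟨by linarith [hx.1], by linarith [hx.2]⟩
    have hanti2 : StrictAntiOn D (Set.Icc (-b) (-a)) := by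
      apply strictAntiOn_of_deriv_neg (convex_Icc _ _)
      · intro x hx
        exact (hDdiff x (hsub hx)).continuousAt.continuousWithinAt
      · intro x hx
        rw [interior_Icc] at hx
        have hx01 : x ∈ Set.Ioo (-b) (0:ℝ) := ⟨hx.1, by linarith [hx.2]⟩
        have h := hcc x hx01
        rwa [hsecond x (hsub (Set.Ioo_subset_Icc_self hx))] at h
    have hlt := hanti2 (Set.left_mem_Icc.2 (by linarith)) (Set.right_mem_Icc.2 (by linarith))
      (by linarith)
    rw [hDa, hDb] at hlt
    exact lt_irrefl _ hlt
  rcases lt_trichotomy B₁ B₂ with h | h | h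
  · exact (key B₁ B₂ hB₁pos h hB₂.2
      (hDfit B₁ hB₁pos hB₁.2 hsf₁) (hDfit B₂ hB₂pos hB₂.2 hsf₂)
      (by rw [max_eq_right h.le] at hconcave; exact hconcave)).elim
  · exact h
  · exact (key B₂ B₁ hB₂pos h hB₁.2
      (hDfit B₂ hB₂pos hB₂.2 hsf₂) (hDfit B₁ hB₁pos hB₁.2 hsf₁)
      (by rw [max_eq_left h.le] at hconcave; exact hconcave)).elim
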